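/- Assume H^{2,0} ≠ 0 and that the t-invariant part of the center of H is trivial: {a ∈ H : ab = ba for all b ∈ H, and t(a) = a} = ℚ·1. Then H_ℂ = W ⊕ σ(W). -/

import Mathlib

open scoped TensorProduct

noncomputable section

/-- Complex conjugation on `ℂ` as a `ℚ`-algebra homomorphism. -/
def conjQAlg : ℂ →ₐ[ℚ] ℂ := (Complex.conjAe.restrictScalars ℚ).toAlgHom

variable (H : Type) [Ring H] [Algebra ℚ H] [FiniteDimensional ℚ H]

/-- The conjugate-linear involution of `H_ℂ = ℂ ⊗[ℚ] H` fixing `H`. -/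
def sigmaC : ℂ ⊗[ℚ] H →ₗ[ℚ] ℂ ⊗[ℚ] H :=
  (Algebra.TensorProduct.map conjQAlg (AlgHom.id ℚ H)).toLinearMap

/-- The inclusion of `H` into `H_ℂ = ℂ ⊗[ℚ] H`. -/
def inclH : H →ₐ[ℚ] ℂ ⊗[ℚ] H := Algebra.TensorProduct.includeRight

/-- The data of a polarized weight 2 Hodge structure on a finite-dimensional `ℚ`-algebra `H`,
compatible with the ring structure:
(i) a Hodge decomposition `H_ℂ = H^{2,0} ⊕ H^{1,1} ⊕ H^{0,2}` with `σ(H^{2,0}) = H^{0,2}`,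
`σ(H^{1,1}) = H^{1,1}`;
(ii) a polarization: a symmetric `ℚ`-bilinear form `B` on `H` with `ℂ`-bilinear extension `BC`
to `H_ℂ`, whose associated Hermitian pairing `h(α,β) := BC α (σ β)` makes the Hodge pieces
pairwise orthogonal and is positive definite on `H^{2,0}`, `H^{0,2}` and negative definite on
`H^{1,1}`;
(iii) the product is a morphism of Hodge structures of bidegree `(-1,-1)`:
`H^{p,q}·H^{p',q'} ⊆ H^{p+p'-1,q+q'-1}`;
(iv) an adjunction `t`: a `ℚ`-linear involution with `t(ab) = t(b)t(a)`,
`⟨ab,c⟩ = ⟨b, t(a)c⟩` and `⟨ab,c⟩ = ⟨a, c·t(b)⟩`. -/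
structure HodgeAlgebraData where
  H20 : Submodule ℂ (ℂ ⊗[ℚ] H)
  H11 : Submodule ℂ (ℂ ⊗[ℚ] H)
  H02 : Submodule ℂ (ℂ ⊗[ℚ] H)
  sup_top : H20 ⊔ H11 ⊔ H02 = ⊤
  disj1 : H20 ⊓ (H11 ⊔ H02) = ⊥
  disj2 : H11 ⊓ H02 = ⊥
  sigma_20 : ∀ x ∈ H20, sigmaC H x ∈ H02
  sigma_02 : ∀ x ∈ H02, sigmaC H x ∈ H20
  sigma_11 : ∀ x ∈ H11, sigmaC H x ∈ H11
  B : H →ₗ[ℚ] H →ₗ[ℚ] ℚ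
  B_symm : ∀ a b : H, B a b = B b a
  BC : (ℂ ⊗[ℚ] H) →ₗ[ℂ] (ℂ ⊗[ℚ] H) →ₗ[ℂ] ℂ
  BC_extends : ∀ a b : H, BC (inclH H a) (inclH H b) = (B a b : ℂ)
  BC_symm : ∀ x y, BC x y = BC y x
  BC_conj : ∀ x y, BC (sigmaC H x) (sigmaC H y) = starRingEnd ℂ (BC x y)
  orth_20_11 : ∀ x ∈ H20, ∀ y ∈ H11, BC x (sigmaC H y) = 0
  orth_20_02 : ∀ x ∈ H20, ∀ y ∈ H02, BC x (sigmaC H y) = 0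
  orth_11_02 : ∀ x ∈ H11, ∀ y ∈ H02, BC x (sigmaC H y) = 0
  pos_20 : ∀ x ∈ H20, x ≠ 0 → 0 < (BC x (sigmaC H x)).re ∧ (BC x (sigmaC H x)).im = 0
  pos_02 : ∀ x ∈ H02, x ≠ 0 → 0 < (BC x (sigmaC H x)).re ∧ (BC x (sigmaC H x)).im = 0
  neg_11 : ∀ x ∈ H11, x ≠ 0 → (BC x (sigmaC H x)).re < 0 ∧ (BC x (sigmaC H x)).im = 0
  mul_20_20 : ∀ x ∈ H20, ∀ y ∈ H20, x * y = 0
  mul_20_11 : ∀ x ∈ H20, ∀ y ∈ H11, x * y ∈ H20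
  mul_11_20 : ∀ x ∈ H11, ∀ y ∈ H20, x * y ∈ H20
  mul_11_11 : ∀ x ∈ H11, ∀ y ∈ H11, x * y ∈ H11
  mul_20_02 : ∀ x ∈ H20, ∀ y ∈ H02, x * y ∈ H11
  mul_02_20 : ∀ x ∈ H02, ∀ y ∈ H20, x * y ∈ H11
  mul_02_02 : ∀ x ∈ H02, ∀ y ∈ H02, x * y = 0
  mul_11_02 : ∀ x ∈ H11, ∀ y ∈ H02, x * y ∈ H02
  mul_02_11 : ∀ x ∈ H02, ∀ y ∈ H11, x * y ∈ H02
  t : H →ₗ[ℚ] H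
  t_invol : ∀ a : H, t (t a) = a
  t_mul : ∀ a b : H, t (a * b) = t b * t a
  adj_left : ∀ a b c : H, B (a * b) c = B b (t a * c)
  adj_right : ∀ a b c : H, B (a * b) c = B a (c * t b)

variable {H}

/-- `W := H^{2,0}·H_ℂ`, the `ℂ`-linear span of all products `x·y` with `x ∈ H^{2,0}`,
`y ∈ H_ℂ`. -/
def HodgeAlgebraData.W (D : HodgeAlgebraData H) : Submodule ℂ (ℂ ⊗[ℚ] H) := D.H20 * ⊤

/-- `σ(W)`, the image of `W` under the conjugation `σ`, as a `ℚ`-subspace of `H_ℂ`. -/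
def HodgeAlgebraData.sigmaW (D : HodgeAlgebraData H) : Submodule ℚ (ℂ ⊗[ℚ] H) :=
  (D.W.restrictScalars ℚ).map (sigmaC H)

/-- The `ℂ`-linear extension of `t` to `H_ℂ`. -/
def HodgeAlgebraData.tC (D : HodgeAlgebraData H) : ℂ ⊗[ℚ] H →ₗ[ℂ] ℂ ⊗[ℚ] H :=
  LinearMap.baseChange ℂ D.t

/-! Write `U := H^{2,0}·H^{0,2} + H^{0,2}·H^{2,0} ⊆ H^{1,1}`.
Then `W = H^{2,0} ⊕ H^{2,0}·H^{0,2}` and `σ(W) = H^{0,2} ⊕ H^{0,2}·H^{2,0}`; the adjunction makes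
`⟨,⟩` vanish on `H^{2,0}·H^{0,2}`, while `h` is definite on `H^{1,1}`, so `W ∩ σ(W) = 0`, and
`W + σ(W) = H_ℂ` as soon as `H^{1,1} = U`.

Since `U` is `σ`-stable and `h` is definite on it, `H_ℂ = U ⊕ U^⊥`, and the adjunction shows that
`U^⊥ ∩ H^{1,1}` consists of elements annihilating `H^{2,0}` on both sides; these form a two-sided
ideal killing `U`. Writing `1 = s + e` with `s ∈ U`, the element `e` is a unit of that ideal, hence
central and `t`-invariant. Expanding `e` in a `ℚ`-basis of `ℂ`, every coordinate lies in the
`t`-invariant centre of `H`, so `e = μ·1`. If `μ ≠ 0`, then `1` annihilates `H^{2,0} ≠ 0`, which is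
absurd; so `e = 0`, the ideal is zero, and `H^{1,1} = U`. -/

namespace TensorProduct

variable {K L M N ι : Type*} [CommSemiring K] [AddCommMonoid L] [Module K L]
  [AddCommMonoid M] [Module K M] [AddCommMonoid N] [Module K N] [DecidableEq ι]

lemma equivFinsuppOfBasisLeft_lTensor (ℬ : Module.Basis ι K L) (g : M →ₗ[K] N)
    (x : L ⊗[K] M) (i : ι) :
    equivFinsuppOfBasisLeft ℬ (g.lTensor L x) i = g (equivFinsuppOfBasisLeft ℬ x i) := by
  induction x using TensorProduct.induction_on with
  | zero => simp
  | tmul l m => simp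
  | add x y hx hy => simp [hx, hy]

lemma exists_eq_tmul_one_of_equivFinsuppOfBasisLeft {A : Type*} [Semiring A] [Algebra K A]
    (ℬ : Module.Basis ι K L) (x : L ⊗[K] A)
    (hx : ∀ i, ∃ q : K, equivFinsuppOfBasisLeft ℬ x i = q • 1) : ∃ l : L, x = l ⊗ₜ 1 := by
  choose q hq using hx
  set c := equivFinsuppOfBasisLeft ℬ x
  refine ⟨c.sum fun i _ => q i • ℬ i, ?_⟩
  rw [← (equivFinsuppOfBasisLeft ℬ).symm_apply_apply x, equivFinsuppOfBasisLeft_symm_apply,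
    Finsupp.sum, Finsupp.sum, sum_tmul]
  refine Finset.sum_congr rfl fun i _ => ?_
  rw [hq, smul_tmul]

end TensorProduct

namespace Algebra.TensorProduct

section

variable {K L A : Type*} [CommSemiring K] [Semiring L] [Algebra K L] [Semiring A] [Algebra K A]

lemma mul_one_tmul_eq_lTensor (x : L ⊗[K] A) (b : A) :
    x * (1 ⊗ₜ b) = (LinearMap.mulRight K b).lTensor L x := by
  induction x using TensorProduct.induction_on with
  | zero => simp
  | tmul l a => simp
  | add x y hx hy => simp [add_mul, hx, hy]

lemma one_tmul_mul_eq_lTensor (x : L ⊗[K] A) (b : A) :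
    (1 ⊗ₜ b) * x = (LinearMap.mulLeft K b).lTensor L x := by
  induction x using TensorProduct.induction_on with
  | zero => simp
  | tmul l a => simp
  | add x y hx hy => simp [mul_add, hx, hy]

end

lemma exists_eq_tmul_one_of_commute_of_lTensor_eq {K L A : Type*} [Field K] [Ring L]
    [Algebra K L] [Semiring A] [Algebra K A] (t : A →ₗ[K] A)
    (hcenter : ∀ a : A, (∀ b, a * b = b * a) → t a = a → ∃ q : K, a = q • 1)
    {x : L ⊗[K] A} (hcomm : ∀ b : A, x * (1 ⊗ₜ b) = (1 ⊗ₜ b) * x) (ht : t.lTensor L x = x) :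
    ∃ l : L, x = l ⊗ₜ 1 := by
  classical
  let ℬ := Module.Basis.ofVectorSpace K L
  refine TensorProduct.exists_eq_tmul_one_of_equivFinsuppOfBasisLeft ℬ x fun i => ?_
  refine hcenter _ (fun b => ?_) ?_
  · have := congrArg (fun y => TensorProduct.equivFinsuppOfBasisLeft ℬ y i) (hcomm b)
    simpa [mul_one_tmul_eq_lTensor, one_tmul_mul_eq_lTensor,
      TensorProduct.equivFinsuppOfBasisLeft_lTensor] using this
  · rw [← TensorProduct.equivFinsuppOfBasisLeft_lTensor, ht]

end Algebra.TensorProduct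

namespace HodgeAlgebraData

variable {H : Type} [Ring H] [Algebra ℚ H]

@[simp]
lemma sigmaC_tmul (z : ℂ) (a : H) : sigmaC H (z ⊗ₜ[ℚ] a) = starRingEnd ℂ z ⊗ₜ[ℚ] a := rfl

lemma sigmaC_mul (x y : ℂ ⊗[ℚ] H) : sigmaC H (x * y) = sigmaC H x * sigmaC H y :=
  map_mul (Algebra.TensorProduct.map conjQAlg (AlgHom.id ℚ H)) x y

@[simp]
lemma sigmaC_sigmaC (x : ℂ ⊗[ℚ] H) : sigmaC H (sigmaC H x) = x := by
  induction x using TensorProduct.induction_on with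
  | zero => simp
  | tmul z a => simp
  | add u v hu hv => simp [hu, hv]

variable (D : HodgeAlgebraData H)

@[simp]
lemma tC_tmul (z : ℂ) (a : H) : D.tC (z ⊗ₜ[ℚ] a) = z ⊗ₜ[ℚ] D.t a := rfl

lemma tC_mul (x y : ℂ ⊗[ℚ] H) : D.tC (x * y) = D.tC y * D.tC x := by
  induction x using TensorProduct.induction_on with
  | zero => simp
  | add u v hu hv => simp [add_mul, mul_add, hu, hv]
  | tmul z a =>
    induction y using TensorProduct.induction_on with
    | zero => simp
    | add u v hu hv => simp [add_mul, mul_add, hu, hv]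
    | tmul w b => simp [D.t_mul, mul_comm]

@[simp]
lemma tC_tC (x : ℂ ⊗[ℚ] H) : D.tC (D.tC x) = x := by
  induction x using TensorProduct.induction_on with
  | zero => simp
  | tmul z a => simp [D.t_invol]
  | add u v hu hv => simp [hu, hv]

lemma BC_tmul (z w : ℂ) (a b : H) :
    D.BC (z ⊗ₜ[ℚ] a) (w ⊗ₜ[ℚ] b) = z * w * D.B a b := by
  have h := D.BC_extends a b
  simp only [inclH, Algebra.TensorProduct.includeRight_apply] at h
  rw [TensorProduct.tmul_eq_smul_one_tmul z, TensorProduct.tmul_eq_smul_one_tmul w]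
  simp only [map_smul, LinearMap.smul_apply, h, smul_eq_mul]
  ring

lemma BC_mul_left (x y z : ℂ ⊗[ℚ] H) : D.BC (x * y) z = D.BC y (D.tC x * z) := by
  induction x using TensorProduct.induction_on with
  | zero => simp
  | add u v hu hv => simp [add_mul, hu, hv]
  | tmul α a =>
    induction y using TensorProduct.induction_on with
    | zero => simp
    | add u v hu hv => simp [mul_add, hu, hv]
    | tmul β b =>
      induction z using TensorProduct.induction_on with
      | zero => simp
      | add u v hu hv => rw [mul_add, map_add, map_add, hu, hv]
      | tmul γ c =>
        simp only [Algebra.TensorProduct.tmul_mul_tmul, tC_tmul, BC_tmul, D.adj_left]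
        ring

lemma BC_mul_right (x y z : ℂ ⊗[ℚ] H) : D.BC (x * y) z = D.BC x (z * D.tC y) := by
  induction x using TensorProduct.induction_on with
  | zero => simp
  | add u v hu hv => simp [add_mul, hu, hv]
  | tmul α a =>
    induction y using TensorProduct.induction_on with
    | zero => simp
    | add u v hu hv => simp [mul_add, hu, hv]
    | tmul β b =>
      induction z using TensorProduct.induction_on with
      | zero => simp
      | add u v hu hv => rw [add_mul, map_add, map_add, hu, hv]
      | tmul γ c =>
        simp only [Algebra.TensorProduct.tmul_mul_tmul, tC_tmul, BC_tmul, D.adj_right]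
        ring

lemma exists_eq_add_add (x : ℂ ⊗[ℚ] H) :
    ∃ a ∈ D.H20, ∃ b ∈ D.H11, ∃ c ∈ D.H02, x = a + b + c := by
  have hx : x ∈ D.H20 ⊔ D.H11 ⊔ D.H02 := D.sup_top ▸ Submodule.mem_top
  obtain ⟨y, hy, c, hc, rfl⟩ := Submodule.mem_sup.1 hx
  obtain ⟨a, ha, b, hb, rfl⟩ := Submodule.mem_sup.1 hy
  exact ⟨a, ha, b, hb, c, hc, rfl⟩

lemma eq_zero_of_add_add_eq_zero {a b c : ℂ ⊗[ℚ] H} (ha : a ∈ D.H20) (hb : b ∈ D.H11)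
    (hc : c ∈ D.H02) (h : a + b + c = 0) : a = 0 ∧ b = 0 ∧ c = 0 := by
  have ha0 : a = 0 := by
    have hbc : a = -(b + c) := by rw [eq_neg_iff_add_eq_zero, ← add_assoc, h]
    have : a ∈ D.H20 ⊓ (D.H11 ⊔ D.H02) :=
      ⟨ha, hbc ▸ Submodule.neg_mem _ (Submodule.add_mem_sup hb hc)⟩
    rwa [D.disj1] at this
  subst ha0
  have hb0 : b = 0 := by
    have hbc : b = -c := by rw [eq_neg_iff_add_eq_zero, ← zero_add b, h]
    have : b ∈ D.H11 ⊓ D.H02 := ⟨hb, hbc ▸ Submodule.neg_mem _ hc⟩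
    rwa [D.disj2] at this
  subst hb0
  exact ⟨rfl, rfl, by simpa using h⟩

lemma BC_sigmaC_self_ne_zero {x : ℂ ⊗[ℚ] H}
    (hx : x ∈ D.H20 ∨ x ∈ D.H11 ∨ x ∈ D.H02) (hx0 : x ≠ 0) : D.BC x (sigmaC H x) ≠ 0 := by
  intro h
  rcases hx with hx | hx | hx
  · simpa [h] using (D.pos_20 x hx hx0).1
  · simpa [h] using (D.neg_11 x hx hx0).1
  · simpa [h] using (D.pos_02 x hx hx0).1

lemma BC_H20_H20 {a a' : ℂ ⊗[ℚ] H} (ha : a ∈ D.H20) (ha' : a' ∈ D.H20) : D.BC a a' = 0 := by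
  simpa using D.orth_20_02 a ha _ (D.sigma_20 a' ha')

lemma BC_H20_H11 {a b : ℂ ⊗[ℚ] H} (ha : a ∈ D.H20) (hb : b ∈ D.H11) : D.BC a b = 0 := by
  simpa using D.orth_20_11 a ha _ (D.sigma_11 b hb)

lemma BC_H11_H02 {b c : ℂ ⊗[ℚ] H} (hb : b ∈ D.H11) (hc : c ∈ D.H02) : D.BC b c = 0 := by
  have h := D.BC_conj b c
  rw [D.BC_symm, D.BC_H20_H11 (D.sigma_02 c hc) (D.sigma_11 b hb)] at h
  simpa using h.symm

lemma BC_H02_H02 {c c' : ℂ ⊗[ℚ] H} (hc : c ∈ D.H02) (hc' : c' ∈ D.H02) : D.BC c c' = 0 := by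
  simpa [D.BC_conj] using congrArg (starRingEnd ℂ)
    (D.BC_H20_H20 (D.sigma_02 c hc) (D.sigma_02 c' hc'))

lemma eq_zero_of_mem_H20 {x : ℂ ⊗[ℚ] H} (hx : x ∈ D.H20) (h : ∀ c ∈ D.H02, D.BC x c = 0) :
    x = 0 := by
  by_contra hx0
  exact D.BC_sigmaC_self_ne_zero (Or.inl hx) hx0 (h _ (D.sigma_20 x hx))

lemma eq_zero_of_mem_H11 {x : ℂ ⊗[ℚ] H} (hx : x ∈ D.H11) (h : ∀ b ∈ D.H11, D.BC x b = 0) :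
    x = 0 := by
  by_contra hx0
  exact D.BC_sigmaC_self_ne_zero (Or.inr (Or.inl hx)) hx0 (h _ (D.sigma_11 x hx))

lemma eq_zero_of_mem_H02 {x : ℂ ⊗[ℚ] H} (hx : x ∈ D.H02) (h : ∀ a ∈ D.H20, D.BC x a = 0) :
    x = 0 := by
  by_contra hx0
  exact D.BC_sigmaC_self_ne_zero (Or.inr (Or.inr hx)) hx0 (h _ (D.sigma_02 x hx))

lemma mem_H20_of_BC_eq_zero {x : ℂ ⊗[ℚ] H} (h20 : ∀ z ∈ D.H20, D.BC x z = 0)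
    (h11 : ∀ z ∈ D.H11, D.BC x z = 0) : x ∈ D.H20 := by
  obtain ⟨a, ha, b, hb, c, hc, rfl⟩ := D.exists_eq_add_add x
  have hc0 : c = 0 := D.eq_zero_of_mem_H02 hc fun z hz => by
    simpa [D.BC_H20_H20 ha hz, D.BC_symm b, D.BC_H20_H11 hz hb] using h20 z hz
  have hb0 : b = 0 := D.eq_zero_of_mem_H11 hb fun z hz => by
    simpa [D.BC_H20_H11 ha hz, D.BC_symm c, D.BC_H11_H02 hz hc] using h11 z hz
  simpa [hb0, hc0] using ha

lemma mem_H11_of_BC_eq_zero {x : ℂ ⊗[ℚ] H} (h20 : ∀ z ∈ D.H20, D.BC x z = 0)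
    (h02 : ∀ z ∈ D.H02, D.BC x z = 0) : x ∈ D.H11 := by
  obtain ⟨a, ha, b, hb, c, hc, rfl⟩ := D.exists_eq_add_add x
  have hc0 : c = 0 := D.eq_zero_of_mem_H02 hc fun z hz => by
    simpa [D.BC_H20_H20 ha hz, D.BC_symm b, D.BC_H20_H11 hz hb] using h20 z hz
  have ha0 : a = 0 := D.eq_zero_of_mem_H20 ha fun z hz => by
    simpa [D.BC_H11_H02 hb hz, D.BC_H02_H02 hc hz] using h02 z hz
  simpa [ha0, hc0] using hb

lemma one_mem_H11 : (1 : ℂ ⊗[ℚ] H) ∈ D.H11 := by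
  obtain ⟨a, ha, b, hb, c, hc, h1⟩ := D.exists_eq_add_add 1
  -- compare Hodge components in `1 * a = a`, `b * 1 = b`, `c * 1 = c` and `1 * b = b`
  have hba : b * a = a := by
    have h : b * a + c * a = a := by
      simpa [add_mul, D.mul_20_20 a ha a ha] using congrArg (· * a) h1.symm
    refine sub_eq_zero.1 (D.eq_zero_of_add_add_eq_zero (Submodule.sub_mem _
      (D.mul_11_20 b hb a ha) ha) (D.mul_02_20 c hc a ha) (zero_mem _) ?_).1
    rw [add_zero, sub_add_eq_add_sub, h, sub_self]
  have hba₀ : b * a = 0 := by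
    have h : b * a + b * b + b * c = b := by simpa [mul_add] using congrArg (b * ·) h1.symm
    refine (D.eq_zero_of_add_add_eq_zero (D.mul_11_20 b hb a ha) (Submodule.sub_mem _
      (D.mul_11_11 b hb b hb) hb) (D.mul_11_02 b hb c hc) ?_).1
    rw [add_sub, sub_add_eq_add_sub, h, sub_self]
  have hcb : c * b = c := by
    have h : c * a + c * b = c := by
      simpa [mul_add, D.mul_02_02 c hc c hc] using congrArg (c * ·) h1.symm
    refine sub_eq_zero.1 (D.eq_zero_of_add_add_eq_zero (zero_mem _) (D.mul_02_20 c hc a ha)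
      (Submodule.sub_mem _ (D.mul_02_11 c hc b hb) hc) ?_).2.2
    rw [zero_add, add_sub, h, sub_self]
  have hcb₀ : c * b = 0 := by
    have h : a * b + b * b + c * b = b := by simpa [add_mul] using congrArg (· * b) h1.symm
    refine (D.eq_zero_of_add_add_eq_zero (D.mul_20_11 a ha b hb) (Submodule.sub_mem _
      (D.mul_11_11 b hb b hb) hb) (D.mul_02_11 c hc b hb) ?_).2.2
    rw [add_sub, sub_add_eq_add_sub, h, sub_self]
  rw [h1, ← hba, hba₀, ← hcb, hcb₀, zero_add, add_zero]
  exact hb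

lemma BC_tC (x z : ℂ ⊗[ℚ] H) : D.BC (D.tC x) z = D.BC 1 (x * z) := by
  simpa using D.BC_mul_left (D.tC x) 1 z

lemma tC_mem_H20 {x : ℂ ⊗[ℚ] H} (hx : x ∈ D.H20) : D.tC x ∈ D.H20 := by
  refine D.mem_H20_of_BC_eq_zero (fun z hz => ?_) (fun z hz => ?_)
  · rw [BC_tC, D.mul_20_20 x hx z hz, map_zero]
  · rw [BC_tC, D.BC_symm, D.BC_H20_H11 (D.mul_20_11 x hx z hz) D.one_mem_H11]

lemma tC_mem_H11 {x : ℂ ⊗[ℚ] H} (hx : x ∈ D.H11) : D.tC x ∈ D.H11 := by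
  refine D.mem_H11_of_BC_eq_zero (fun z hz => ?_) (fun z hz => ?_)
  · rw [BC_tC, D.BC_symm, D.BC_H20_H11 (D.mul_11_20 x hx z hz) D.one_mem_H11]
  · rw [BC_tC, D.BC_H11_H02 D.one_mem_H11 (D.mul_11_02 x hx z hz)]

lemma W_eq : D.W = D.H20 ⊔ D.H20 * D.H02 := by
  refine le_antisymm (Submodule.mul_le.2 fun a ha x _ => ?_)
    (sup_le (fun a ha => mul_one a ▸ Submodule.mul_mem_mul ha Submodule.mem_top)
      (mul_le_mul' le_rfl le_top))
  obtain ⟨p, hp, q, hq, r, hr, rfl⟩ := D.exists_eq_add_add x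
  rw [mul_add, mul_add, D.mul_20_20 a ha p hp, zero_add]
  exact Submodule.add_mem_sup (D.mul_20_11 a ha q hq) (Submodule.mul_mem_mul ha hr)

lemma mem_sigmaW_iff {x : ℂ ⊗[ℚ] H} : x ∈ D.sigmaW ↔ sigmaC H x ∈ D.W := by
  refine ⟨?_, fun hx => ⟨sigmaC H x, hx, sigmaC_sigmaC x⟩⟩
  rintro ⟨y, hy, rfl⟩
  simpa using hy

lemma H20_mul_H02_le_H11 : D.H20 * D.H02 ≤ D.H11 := Submodule.mul_le.2 D.mul_20_02

lemma H02_mul_H20_le_H11 : D.H02 * D.H20 ≤ D.H11 := Submodule.mul_le.2 D.mul_02_20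

lemma sigmaC_mem_H02_mul_H20 {m : ℂ ⊗[ℚ] H} (hm : m ∈ D.H20 * D.H02) :
    sigmaC H m ∈ D.H02 * D.H20 := by
  refine Submodule.mul_induction_on hm (fun a ha c hc => ?_) fun x y hx hy => ?_
  · rw [sigmaC_mul]; exact Submodule.mul_mem_mul (D.sigma_20 a ha) (D.sigma_02 c hc)
  · rw [map_add]; exact Submodule.add_mem _ hx hy

lemma sigmaC_mem_H20_mul_H02 {m : ℂ ⊗[ℚ] H} (hm : m ∈ D.H02 * D.H20) :
    sigmaC H m ∈ D.H20 * D.H02 := by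
  refine Submodule.mul_induction_on hm (fun c hc a ha => ?_) fun x y hx hy => ?_
  · rw [sigmaC_mul]; exact Submodule.mul_mem_mul (D.sigma_02 c hc) (D.sigma_20 a ha)
  · rw [map_add]; exact Submodule.add_mem _ hx hy

lemma mul_mem_H20_mul_H02 {a m : ℂ ⊗[ℚ] H} (ha : a ∈ D.H20) (hm : m ∈ D.H20 * D.H02) :
    a * m = 0 := by
  refine Submodule.mul_induction_on hm (fun a' ha' c _ => ?_) fun x y hx hy => ?_
  · rw [← mul_assoc, D.mul_20_20 a ha a' ha', zero_mul]
  · rw [mul_add, hx, hy, add_zero]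

lemma BC_H20_mul_H02 {u v : ℂ ⊗[ℚ] H} (hu : u ∈ D.H20 * D.H02) (hv : v ∈ D.H20 * D.H02) :
    D.BC u v = 0 := by
  refine Submodule.mul_induction_on hu (fun a ha c _ => ?_) fun x y hx hy => ?_
  · rw [D.BC_mul_left, D.mul_mem_H20_mul_H02 (D.tC_mem_H20 ha) hv, map_zero]
  · rw [map_add, LinearMap.add_apply, hx, hy, add_zero]

lemma eq_zero_of_mem_H20_mul_H02_of_mem_H02_mul_H20 {m : ℂ ⊗[ℚ] H}
    (hm : m ∈ D.H20 * D.H02) (hm' : m ∈ D.H02 * D.H20) : m = 0 := by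
  by_contra hm0
  exact D.BC_sigmaC_self_ne_zero (Or.inr (Or.inl (D.H20_mul_H02_le_H11 hm))) hm0
    (D.BC_H20_mul_H02 hm (D.sigmaC_mem_H20_mul_H02 hm'))

lemma W_inf_sigmaW : D.W.restrictScalars ℚ ⊓ D.sigmaW = ⊥ := by
  refine eq_bot_iff.2 fun x hx => ?_
  obtain ⟨hxW, hxσ⟩ := Submodule.mem_inf.1 hx
  rw [Submodule.restrictScalars_mem, W_eq] at hxW
  rw [mem_sigmaW_iff, W_eq] at hxσ
  obtain ⟨a, ha, m, hm, rfl⟩ := Submodule.mem_sup.1 hxW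
  obtain ⟨a', ha', m', hm', hσ⟩ := Submodule.mem_sup.1 hxσ
  have hsum : a + m = sigmaC H a' + sigmaC H m' := by rw [← map_add, hσ, sigmaC_sigmaC]
  have hm'C := D.sigmaC_mem_H02_mul_H20 hm'
  obtain ⟨ha0, hmm', -⟩ := D.eq_zero_of_add_add_eq_zero ha
    (Submodule.sub_mem _ (D.H20_mul_H02_le_H11 hm) (D.H02_mul_H20_le_H11 hm'C))
    (Submodule.neg_mem _ (D.sigma_20 a' ha')) (by rw [← sub_eq_zero.2 hsum]; abel)
  rw [sub_eq_zero] at hmm'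
  rw [Submodule.mem_bot, ha0, D.eq_zero_of_mem_H20_mul_H02_of_mem_H02_mul_H20 hm (hmm' ▸ hm'C),
    add_zero]

def mixedProducts : Submodule ℂ (ℂ ⊗[ℚ] H) := D.H20 * D.H02 ⊔ D.H02 * D.H20

lemma mixedProducts_le_H11 : D.mixedProducts ≤ D.H11 :=
  sup_le D.H20_mul_H02_le_H11 D.H02_mul_H20_le_H11

lemma sigmaC_mem_mixedProducts {u : ℂ ⊗[ℚ] H} (hu : u ∈ D.mixedProducts) :
    sigmaC H u ∈ D.mixedProducts := by
  obtain ⟨m, hm, m', hm', rfl⟩ := Submodule.mem_sup.1 hu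
  rw [map_add, add_comm]
  exact Submodule.add_mem_sup (D.sigmaC_mem_H20_mul_H02 hm') (D.sigmaC_mem_H02_mul_H20 hm)

lemma W_sup_sigmaW_of_H11_le (h : D.H11 ≤ D.mixedProducts) :
    D.W.restrictScalars ℚ ⊔ D.sigmaW = ⊤ := by
  refine eq_top_iff.2 fun x _ => ?_
  obtain ⟨a, ha, b, hb, c, hc, rfl⟩ := D.exists_eq_add_add x
  obtain ⟨m, hm, m', hm', rfl⟩ := Submodule.mem_sup.1 (h hb)
  have hW : a + m ∈ D.W.restrictScalars ℚ := by
    rw [Submodule.restrictScalars_mem, W_eq]; exact Submodule.add_mem_sup ha hm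
  have hσW : c + m' ∈ D.sigmaW := by
    rw [mem_sigmaW_iff, W_eq, map_add]
    exact Submodule.add_mem_sup (D.sigma_02 c hc) (D.sigmaC_mem_H20_mul_H02 hm')
  rw [show a + (m + m') + c = (a + m) + (c + m') by abel]
  exact Submodule.add_mem_sup hW hσW

structure AnnihilatesH20 (z : ℂ ⊗[ℚ] H) : Prop where
  mem_H11 : z ∈ D.H11
  H20_mul : ∀ a ∈ D.H20, a * z = 0
  mul_H20 : ∀ a ∈ D.H20, z * a = 0

lemma isCompl_mixedProducts_orthogonal [FiniteDimensional ℚ H] :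
    IsCompl D.mixedProducts (LinearMap.BilinForm.orthogonal D.BC D.mixedProducts) := by
  have hrefl : D.BC.IsRefl := fun x y h => D.BC_symm x y ▸ h
  refine (LinearMap.BilinForm.restrict_nondegenerate_iff_isCompl_orthogonal hrefl).1 <|
    (LinearMap.IsRefl.nondegenerate_iff_separatingLeft
      (B := LinearMap.BilinForm.restrict D.BC D.mixedProducts) fun x y h => hrefl _ _ h).2 ?_
  rintro ⟨u, hu⟩ h
  by_contra hu0
  exact D.BC_sigmaC_self_ne_zero (Or.inr (Or.inl (D.mixedProducts_le_H11 hu)))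
    (fun h0 => hu0 (Subtype.ext h0)) (h ⟨_, D.sigmaC_mem_mixedProducts hu⟩)

lemma annihilatesH20_of_mem_orthogonal {z : ℂ ⊗[ℚ] H}
    (hz : z ∈ LinearMap.BilinForm.orthogonal D.BC D.mixedProducts) (hz11 : z ∈ D.H11) :
    D.AnnihilatesH20 z := by
  rw [LinearMap.BilinForm.mem_orthogonal_iff] at hz
  refine ⟨hz11, fun a ha => ?_, fun a ha => ?_⟩
  · refine D.eq_zero_of_mem_H20 (D.mul_20_11 a ha z hz11) fun c hc => ?_
    rw [D.BC_symm, ← D.tC_tC a, ← D.BC_mul_left]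
    exact hz _ (Submodule.mem_sup_left (Submodule.mul_mem_mul (D.tC_mem_H20 ha) hc))
  · refine D.eq_zero_of_mem_H20 (D.mul_11_20 z hz11 a ha) fun c hc => ?_
    rw [D.BC_symm, ← D.tC_tC a, ← D.BC_mul_right]
    exact hz _ (Submodule.mem_sup_right (Submodule.mul_mem_mul hc (D.tC_mem_H20 ha)))

lemma exists_add_annihilatesH20 [FiniteDimensional ℚ H] {b : ℂ ⊗[ℚ] H} (hb : b ∈ D.H11) :
    ∃ u ∈ D.mixedProducts, ∃ z, D.AnnihilatesH20 z ∧ u + z = b := by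
  obtain ⟨u, hu, z, hz, rfl⟩ := Submodule.mem_sup.1
    (show b ∈ _ ⊔ _ from D.isCompl_mixedProducts_orthogonal.sup_eq_top ▸ Submodule.mem_top)
  have hz11 : z ∈ D.H11 := by
    simpa using Submodule.sub_mem _ hb (D.mixedProducts_le_H11 hu)
  exact ⟨u, hu, z, D.annihilatesH20_of_mem_orthogonal hz hz11, rfl⟩

namespace AnnihilatesH20

variable {D} {z : ℂ ⊗[ℚ] H} (hz : D.AnnihilatesH20 z)
include hz

lemma tC : D.AnnihilatesH20 (D.tC z) := by
  refine ⟨D.tC_mem_H11 hz.mem_H11, fun a ha => ?_, fun a ha => ?_⟩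
  · rw [← D.tC_tC a, ← D.tC_mul, hz.mul_H20 _ (D.tC_mem_H20 ha), map_zero]
  · rw [← D.tC_tC a, ← D.tC_mul, hz.H20_mul _ (D.tC_mem_H20 ha), map_zero]

lemma mul_H02 {c : ℂ ⊗[ℚ] H} (hc : c ∈ D.H02) : z * c = 0 :=
  D.eq_zero_of_mem_H02 (D.mul_11_02 z hz.mem_H11 c hc) fun a ha => by
    rw [D.BC_mul_left, hz.tC.mul_H20 a ha, map_zero]

lemma H02_mul {c : ℂ ⊗[ℚ] H} (hc : c ∈ D.H02) : c * z = 0 :=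
  D.eq_zero_of_mem_H02 (D.mul_02_11 c hc z hz.mem_H11) fun a ha => by
    rw [D.BC_mul_right, hz.tC.H20_mul a ha, map_zero]

lemma mul_mixedProducts {u : ℂ ⊗[ℚ] H} (hu : u ∈ D.mixedProducts) : z * u = 0 := by
  obtain ⟨m, hm, m', hm', rfl⟩ := Submodule.mem_sup.1 hu
  rw [mul_add, ← add_zero (0 : ℂ ⊗[ℚ] H)]
  congr 1
  · refine Submodule.mul_induction_on hm (fun a ha c _ => ?_) fun x y hx hy => ?_
    · rw [← mul_assoc, hz.mul_H20 a ha, zero_mul]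
    · rw [mul_add, hx, hy, add_zero]
  · refine Submodule.mul_induction_on hm' (fun c hc a _ => ?_) fun x y hx hy => ?_
    · rw [← mul_assoc, hz.mul_H02 hc, zero_mul]
    · rw [mul_add, hx, hy, add_zero]

lemma mixedProducts_mul {u : ℂ ⊗[ℚ] H} (hu : u ∈ D.mixedProducts) : u * z = 0 := by
  obtain ⟨m, hm, m', hm', rfl⟩ := Submodule.mem_sup.1 hu
  rw [add_mul, ← add_zero (0 : ℂ ⊗[ℚ] H)]
  congr 1
  · refine Submodule.mul_induction_on hm (fun a _ c hc => ?_) fun x y hx hy => ?_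
    · rw [mul_assoc, hz.H02_mul hc, mul_zero]
    · rw [add_mul, hx, hy, add_zero]
  · refine Submodule.mul_induction_on hm' (fun c _ a ha => ?_) fun x y hx hy => ?_
    · rw [mul_assoc, hz.H20_mul a ha, mul_zero]
    · rw [add_mul, hx, hy, add_zero]

lemma mul_left (x : ℂ ⊗[ℚ] H) : D.AnnihilatesH20 (x * z) := by
  obtain ⟨p, hp, q, hq, r, hr, rfl⟩ := D.exists_eq_add_add x
  rw [add_mul, add_mul, hz.H20_mul p hp, hz.H02_mul hr, zero_add, add_zero]
  refine ⟨D.mul_11_11 q hq z hz.mem_H11, fun a ha => ?_, fun a ha => ?_⟩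
  · rw [← mul_assoc, hz.H20_mul _ (D.mul_20_11 a ha q hq)]
  · rw [mul_assoc, hz.mul_H20 a ha, mul_zero]

lemma mul_right (x : ℂ ⊗[ℚ] H) : D.AnnihilatesH20 (z * x) := by
  obtain ⟨p, hp, q, hq, r, hr, rfl⟩ := D.exists_eq_add_add x
  rw [mul_add, mul_add, hz.mul_H20 p hp, hz.mul_H02 hr, zero_add, add_zero]
  refine ⟨D.mul_11_11 z hz.mem_H11 q hq, fun a ha => ?_, fun a ha => ?_⟩
  · rw [← mul_assoc, hz.H20_mul a ha, zero_mul]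
  · rw [mul_assoc, hz.mul_H20 _ (D.mul_11_20 q hq a ha)]

lemma mul_eq_self_of_add_eq_one {s e : ℂ ⊗[ℚ] H} (hs : s ∈ D.mixedProducts) (hse : s + e = 1) :
    z * e = z := by
  rw [← add_zero (z * e), ← hz.mul_mixedProducts hs, ← mul_add, add_comm, hse, mul_one]

lemma mul_eq_self_of_add_eq_one' {s e : ℂ ⊗[ℚ] H} (hs : s ∈ D.mixedProducts) (hse : s + e = 1) :
    e * z = z := by
  rw [← zero_add (e * z), ← hz.mixedProducts_mul hs, ← add_mul, hse, one_mul]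

lemma commute_of_add_eq_one {s : ℂ ⊗[ℚ] H} (hs : s ∈ D.mixedProducts) (hsz : s + z = 1)
    (x : ℂ ⊗[ℚ] H) : z * x = x * z :=
  calc z * x = z * x * z := ((hz.mul_right x).mul_eq_self_of_add_eq_one hs hsz).symm
    _ = z * (x * z) := mul_assoc z x z
    _ = x * z := (hz.mul_left x).mul_eq_self_of_add_eq_one' hs hsz

lemma tC_eq_of_add_eq_one {s : ℂ ⊗[ℚ] H} (hs : s ∈ D.mixedProducts) (hsz : s + z = 1) :
    D.tC z = z :=
  calc D.tC z = D.tC z * z := (hz.tC.mul_eq_self_of_add_eq_one hs hsz).symm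
    _ = D.tC (D.tC z * z) := by rw [D.tC_mul, D.tC_tC]
    _ = z := by rw [hz.tC.mul_eq_self_of_add_eq_one hs hsz, D.tC_tC]

end AnnihilatesH20

end HodgeAlgebraData

theorem complex_structure_of_trivial_center (D : HodgeAlgebraData H)
    (h20 : D.H20 ≠ ⊥)
    (hcenter : {a : H | (∀ b : H, a * b = b * a) ∧ D.t a = a} =
      {a : H | ∃ q : ℚ, a = q • (1 : H)}) :
    (D.W.restrictScalars ℚ) ⊓ D.sigmaW = ⊥ ∧
      (D.W.restrictScalars ℚ) ⊔ D.sigmaW = ⊤ := by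
  refine ⟨D.W_inf_sigmaW, D.W_sup_sigmaW_of_H11_le fun b hb => ?_⟩
  obtain ⟨s, hs, e, he, hse⟩ := D.exists_add_annihilatesH20 D.one_mem_H11
  obtain ⟨μ, hμ⟩ : ∃ μ : ℂ, e = μ ⊗ₜ 1 :=
    Algebra.TensorProduct.exists_eq_tmul_one_of_commute_of_lTensor_eq D.t
      (fun a ha hta => hcenter.subset ⟨ha, hta⟩) (fun _ => he.commute_of_add_eq_one hs hse _)
      (he.tC_eq_of_add_eq_one hs hse)
  have hμ0 : μ = 0 := by
    by_contra hμ0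
    obtain ⟨a, ha, ha0⟩ := (Submodule.ne_bot_iff _).1 h20
    have h1 : D.AnnihilatesH20 1 := by
      simpa [hμ, hμ0, ← Algebra.TensorProduct.one_def] using he.mul_left (μ⁻¹ ⊗ₜ 1)
    exact ha0 (by simpa using h1.mul_H20 a ha)
  obtain ⟨u, hu, z, hz, rfl⟩ := D.exists_add_annihilatesH20 hb
  rw [← hz.mul_eq_self_of_add_eq_one hs hse, hμ, hμ0, TensorProduct.zero_tmul, mul_zero, add_zero]
  exact hu
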